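/- arXiv:2512.04502 — 4 statements merged into one kernel-verified Lean document; each statement's English description precedes it below -/
import Mathlib

section
/- For every natural number n ≥ 1 and every real number x, the Legendre polynomials satisfy Bonnet's recursion: (n + 1) · P_{n+1}(x) = (2n + 1) · x · P_n(x) − n · P_{n−1}(x). -/
open Real

/-- The Legendre polynomial `P_n`, defined via Rodrigues' formula:
`P_n(x) = 1/(2^n · n!) · dⁿ/dxⁿ (x² − 1)ⁿ`. -/
noncomputable def legendre (n : ℕ) (x : ℝ) : ℝ :=
  (1 / (2 ^ n * n.factorial : ℝ)) * iteratedDeriv n (fun y : ℝ => (y ^ 2 - 1) ^ n) x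

/-!
Write `u = X² - 1` and `qₙ = Dⁿ uⁿ`, so that `Pₙ = qₙ / (2ⁿ n!)`. Applying `D^(n+1)` to
`D u^(n+2) = 2(n+2) u^(n+1) X` and `Dⁿ` to `X · D u^(n+1) = 2(n+1)(u^(n+1) + uⁿ)`, with the Leibniz
rule for a factor `X`, expresses `q_(n+2)` and `X q_(n+1)` through `q_(n+1)`, `qₙ` and the one
extra term `Dⁿ u^(n+1)`. Eliminating that term gives Bonnet's recursion for `qₙ`, and rescaling
by `2ⁿ n!` gives it for `Pₙ`.
-/

open Polynomial

theorem legendre_zero (x : ℝ) : legendre 0 x = 1 := by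
  simp [legendre]

theorem legendre_one (x : ℝ) : legendre 1 x = x := by
  simp [legendre]

namespace Polynomial

protected theorem iteratedDeriv {𝕜 : Type*} [NontriviallyNormedField 𝕜] (p : 𝕜[X]) (n : ℕ) :
    iteratedDeriv n (fun x => p.eval x) = fun x => (derivative^[n] p).eval x := by
  induction n with
  | zero => simp
  | succ n ih =>
    ext x
    rw [iteratedDeriv_succ, ih, Function.iterate_succ_apply', Polynomial.deriv]

variable {R : Type*} [CommRing R]

variable (R) in
noncomputable def rodrigues (n : ℕ) : R[X] :=
  derivative^[n] ((X ^ 2 - 1) ^ n)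

theorem derivative_X_sq_sub_one_pow_succ (n : ℕ) :
    derivative ((X ^ 2 - 1 : R[X]) ^ (n + 1)) = 2 * (n + 1 : R[X]) * (X ^ 2 - 1) ^ n * X := by
  rw [derivative_pow_succ, derivative_sub, derivative_X_sq, derivative_one]
  simp only [map_add, map_natCast, map_one, C_ofNat]
  ring

theorem rodrigues_add_two (n : ℕ) :
    rodrigues R (n + 2) = 2 * (n + 2 : R[X]) *
      (X * rodrigues R (n + 1) + (n + 1 : R[X]) * derivative^[n] ((X ^ 2 - 1) ^ (n + 1))) := by
  have h : 2 * ((n + 1 : ℕ) + 1 : R[X]) = ((2 * (n + 2) : ℕ) : R[X]) := by push_cast; ring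
  rw [rodrigues, Function.iterate_succ_apply, derivative_X_sq_sub_one_pow_succ, mul_assoc, h,
    iterate_derivative_natCast_mul, iterate_derivative_mul_X, nsmul_eq_mul, ← rodrigues]
  push_cast
  ring

theorem X_mul_rodrigues_succ (n : ℕ) :
    X * rodrigues R (n + 1) =
      (n + 2 : R[X]) * derivative^[n] ((X ^ 2 - 1) ^ (n + 1)) +
        2 * (n + 1 : R[X]) * rodrigues R n := by
  have hX : derivative ((X ^ 2 - 1 : R[X]) ^ (n + 1)) * X =
      ((2 * (n + 1) : ℕ) : R[X]) * ((X ^ 2 - 1) ^ (n + 1) + (X ^ 2 - 1) ^ n) := by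
    rw [derivative_X_sq_sub_one_pow_succ]
    push_cast
    ring
  have h := congrArg (derivative^[n]) hX
  rw [iterate_derivative_derivative_mul_X, iterate_derivative_natCast_mul, iterate_map_add,
    nsmul_eq_mul] at h
  rw [rodrigues, rodrigues]
  push_cast at h
  linear_combination h

theorem rodrigues_bonnet (n : ℕ) :
    (n + 2 : R[X]) * rodrigues R (n + 2) = 2 * (n + 2 : R[X]) *
      ((2 * n + 3 : R[X]) * X * rodrigues R (n + 1) - 2 * (n + 1 : R[X]) ^ 2 * rodrigues R n) := by
  linear_combination -2 * (n + 2) * (n + 1) * X_mul_rodrigues_succ (R := R) n +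
    (n + 2) * rodrigues_add_two (R := R) n

end Polynomial

theorem legendre_eq_eval_rodrigues (n : ℕ) (x : ℝ) :
    legendre n x = (rodrigues ℝ n).eval x / (2 ^ n * n.factorial) := by
  have h : (fun y : ℝ => (y ^ 2 - 1) ^ n) = fun y => ((X ^ 2 - 1 : ℝ[X]) ^ n).eval y := by
    simp
  rw [legendre, h, Polynomial.iteratedDeriv, rodrigues, one_div_mul_eq_div]

theorem legendre_bonnet_recursion_general (n : ℕ) (x : ℝ) :
    ((n : ℝ) + 1) * legendre (n + 1) x =
      (2 * (n : ℝ) + 1) * x * legendre n x - (n : ℝ) * legendre (n - 1) x := by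
  rcases n with _ | n
  · simp [legendre_zero, legendre_one]
  · have h := congrArg (eval x) (rodrigues_bonnet (R := ℝ) n)
    simp only [eval_mul, eval_sub, eval_add, eval_pow, eval_X, eval_natCast, eval_ofNat, eval_one] at h
    simp only [legendre_eq_eval_rodrigues, Nat.add_sub_cancel, Nat.factorial_succ, pow_succ]
    field_simp
    push_cast
    linear_combination ((n : ℝ) + 1) * (n.factorial : ℝ) ^ 2 * h

/-- Bonnet's recursion for the Legendre polynomials:
`(n + 1) · P_{n+1}(x) = (2n + 1) · x · P_n(x) − n · P_{n−1}(x)` for `n ≥ 1`. -/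
theorem legendre_bonnet_recursion (n : ℕ) (hn : 1 ≤ n) (x : ℝ) :
    ((n : ℝ) + 1) * legendre (n + 1) x =
      (2 * (n : ℝ) + 1) * x * legendre n x - (n : ℝ) * legendre (n - 1) x :=
  legendre_bonnet_recursion_general n x
end

section
/- For all natural numbers j and k, the Legendre polynomials are orthogonal on [−1, 1]: ∫_{−1}^{1} P_j(x) P_k(x) dx = 0 if j ≠ k, and ∫_{−1}^{1} P_k(x)² dx = 2/(2k + 1). -/
/-!
Write `P_n = (2ⁿ n!)⁻¹ Dⁿ wₙ` with `wₙ = (X² - 1)ⁿ`. Every derivative of `wₙ` of order below `n`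
is divisible by `X² - 1`, hence vanishes at `±1`, so `n` integrations by parts give
`∫₋₁¹ q · Dⁿ wₙ = (-1)ⁿ ∫₋₁¹ Dⁿ q · wₙ` for every polynomial `q`. For `q = Dʲ wⱼ` with `j < k` the
right side vanishes because `deg wⱼ = 2j < j + k`; for `q = Dᵏ wₖ` it is `(-1)ᵏ (2k)! ∫₋₁¹ wₖ`, and
`J_k = ∫₋₁¹ (x² - 1)ᵏ` follows from the recurrence `(2k + 3) J_{k+1} = -(2k + 2) J_k`, obtained by
integrating `x · (w_{k+1})' = (2k + 2)(w_{k+1} + w_k)` by parts.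
-/

open Real MeasureTheory intervalIntegral

open Polynomial

theorem Polynomial.iteratedDeriv_eval {𝕜 : Type*} [NontriviallyNormedField 𝕜] (p : 𝕜[X])
    (m : ℕ) : iteratedDeriv m (fun x => p.eval x) = fun x => (derivative^[m] p).eval x := by
  induction m with
  | zero => rfl
  | succ m ih =>
    rw [iteratedDeriv_succ, ih, Function.iterate_succ_apply']
    funext x
    exact Polynomial.deriv _

theorem Polynomial.iterate_derivative_natDegree {R : Type*} [CommSemiring R] (p : R[X]) :
    derivative^[p.natDegree] p = C (p.natDegree.factorial * p.leadingCoeff) := by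
  have hdeg : (derivative^[p.natDegree] p).natDegree ≤ 0 := by
    simpa using natDegree_iterate_derivative p p.natDegree
  rw [eq_C_of_natDegree_le_zero hdeg, coeff_iterate_derivative, zero_add,
    Nat.descFactorial_self, nsmul_eq_mul, leadingCoeff]

theorem intervalIntegral.integral_eval_mul_eval_derivative (p q : ℝ[X]) (a b : ℝ) :
    ∫ x in a..b, p.eval x * (derivative q).eval x
      = p.eval b * q.eval b - p.eval a * q.eval a
        - ∫ x in a..b, (derivative p).eval x * q.eval x :=
  integral_mul_deriv_eq_deriv_mul (fun x _ => p.hasDerivAt x) (fun x _ => q.hasDerivAt x)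
    (p.derivative.continuous.intervalIntegrable _ _)
    (q.derivative.continuous.intervalIntegrable _ _)

theorem intervalIntegral.integral_eval_mul_eval_iterate_derivative {a b : ℝ} {q : ℝ[X]} {m : ℕ}
    (ha : ∀ i < m, (derivative^[i] q).eval a = 0) (hb : ∀ i < m, (derivative^[i] q).eval b = 0)
    (p : ℝ[X]) :
    ∫ x in a..b, p.eval x * (derivative^[m] q).eval x
      = (-1) ^ m * ∫ x in a..b, (derivative^[m] p).eval x * q.eval x := by
  induction m generalizing p with
  | zero => simp
  | succ m ih =>
    rw [Function.iterate_succ_apply', integral_eval_mul_eval_derivative, ha m m.lt_succ_self,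
      hb m m.lt_succ_self, ih (fun i hi => ha i (hi.trans m.lt_succ_self))
        (fun i hi => hb i (hi.trans m.lt_succ_self)), Function.iterate_succ_apply]
    ring

lemma eval_iterate_derivative_sq_sub_one_pow {R : Type*} [CommRing R] {n m : ℕ} (h : m < n)
    {x : R} (hx : x ^ 2 = 1) : (derivative^[m] ((X ^ 2 - 1 : R[X]) ^ n)).eval x = 0 := by
  obtain ⟨g, hg⟩ := pow_sub_dvd_iterate_derivative_pow (X ^ 2 - 1 : R[X]) n m
  rw [hg, eval_mul, eval_pow]
  simp [hx, zero_pow (Nat.sub_ne_zero_of_lt h)]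

lemma monic_sq_sub_one {R : Type*} [CommRing R] : (X ^ 2 - 1 : R[X]).Monic := by
  rw [← C_1]
  exact monic_X_pow_sub_C 1 two_ne_zero

lemma natDegree_sq_sub_one_pow {R : Type*} [CommRing R] [Nontrivial R] (n : ℕ) :
    ((X ^ 2 - 1 : R[X]) ^ n).natDegree = 2 * n := by
  rw [monic_sq_sub_one.natDegree_pow, ← C_1, natDegree_X_pow_sub_C, mul_comm]

lemma iterate_derivative_sq_sub_one_pow_two_mul {R : Type*} [CommRing R] [Nontrivial R]
    (n : ℕ) : derivative^[2 * n] ((X ^ 2 - 1 : R[X]) ^ n) = C ((2 * n).factorial : R) := by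
  rw [← natDegree_sq_sub_one_pow (R := R), iterate_derivative_natDegree,
    (monic_sq_sub_one.pow n).leadingCoeff, mul_one]

lemma integral_eval_mul_eval_rodrigues (n : ℕ) (p : ℝ[X]) :
    ∫ x in (-1 : ℝ)..1, p.eval x * (derivative^[n] ((X ^ 2 - 1 : ℝ[X]) ^ n)).eval x
      = (-1) ^ n * ∫ x in (-1 : ℝ)..1, (derivative^[n] p).eval x * (x ^ 2 - 1) ^ n := by
  rw [integral_eval_mul_eval_iterate_derivative
    (fun i hi => eval_iterate_derivative_sq_sub_one_pow hi (by norm_num))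
    (fun i hi => eval_iterate_derivative_sq_sub_one_pow hi (by norm_num))]
  simp

lemma integral_rodrigues_mul_rodrigues_of_lt {j k : ℕ} (h : j < k) :
    ∫ x in (-1 : ℝ)..1, (derivative^[j] ((X ^ 2 - 1 : ℝ[X]) ^ j)).eval x
      * (derivative^[k] ((X ^ 2 - 1 : ℝ[X]) ^ k)).eval x = 0 := by
  have hvanish : derivative^[k] (derivative^[j] ((X ^ 2 - 1 : ℝ[X]) ^ j)) = 0 := by
    rw [← Function.iterate_add_apply]
    exact iterate_derivative_eq_zero (by rw [natDegree_sq_sub_one_pow (R := ℝ)]; omega)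
  simp [integral_eval_mul_eval_rodrigues, hvanish]

lemma integral_rodrigues_mul_rodrigues_of_ne {j k : ℕ} (h : j ≠ k) :
    ∫ x in (-1 : ℝ)..1, (derivative^[j] ((X ^ 2 - 1 : ℝ[X]) ^ j)).eval x
      * (derivative^[k] ((X ^ 2 - 1 : ℝ[X]) ^ k)).eval x = 0 := by
  rcases h.lt_or_gt with h | h
  · exact integral_rodrigues_mul_rodrigues_of_lt h
  · simp_rw [mul_comm ((derivative^[j] _).eval _)]
    exact integral_rodrigues_mul_rodrigues_of_lt h

lemma integral_sq_sub_one_pow_succ (n : ℕ) :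
    (2 * n + 3 : ℝ) * ∫ x in (-1 : ℝ)..1, (x ^ 2 - 1) ^ (n + 1)
      = -(2 * n + 2) * ∫ x in (-1 : ℝ)..1, (x ^ 2 - 1) ^ n := by
  have hibp := integral_eval_mul_eval_derivative X ((X ^ 2 - 1 : ℝ[X]) ^ (n + 1)) (-1) 1
  have hderiv : ∀ x : ℝ, x * (derivative ((X ^ 2 - 1 : ℝ[X]) ^ (n + 1))).eval x
      = (2 * n + 2) * ((x ^ 2 - 1) ^ (n + 1) + (x ^ 2 - 1) ^ n) := by
    intro x
    rw [derivative_pow, derivative_sub, derivative_X_sq, derivative_one]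
    simp only [Nat.cast_add, Nat.cast_one, map_add, map_natCast, map_one, add_tsub_cancel_right,
      sub_zero, eval_mul, eval_add, eval_natCast, eval_one, eval_pow, eval_sub, eval_X, eval_C]
    ring
  simp only [eval_X, derivative_X, eval_one, one_mul, hderiv, eval_pow, eval_sub] at hibp
  rw [intervalIntegral.integral_const_mul, intervalIntegral.integral_add
    ((by fun_prop : Continuous _).intervalIntegrable _ _)
    ((by fun_prop : Continuous _).intervalIntegrable _ _)] at hibp
  norm_num at hibp
  linarith

lemma integral_sq_sub_one_pow (n : ℕ) :
    ∫ x in (-1 : ℝ)..1, (x ^ 2 - 1) ^ n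
      = (-1) ^ n * 2 ^ (2 * n + 1) * (n.factorial : ℝ) ^ 2 / (2 * n + 1).factorial := by
  induction n with
  | zero => norm_num
  | succ n ih =>
    have h := integral_sq_sub_one_pow_succ n
    rw [ih, mul_div_assoc', eq_div_iff (by positivity)] at h
    rw [eq_div_iff (by positivity), show 2 * (n + 1) + 1 = 2 * n + 1 + 1 + 1 by ring]
    simp only [Nat.factorial_succ] at h ⊢
    push_cast at h ⊢
    linear_combination (2 * n + 2) * h

lemma integral_rodrigues_sq (n : ℕ) :
    ∫ x in (-1 : ℝ)..1, ((derivative^[n] ((X ^ 2 - 1 : ℝ[X]) ^ n)).eval x) ^ 2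
      = 2 ^ (2 * n + 1) * (n.factorial : ℝ) ^ 2 / (2 * n + 1) := by
  simp_rw [sq ((derivative^[n] _).eval _)]
  rw [integral_eval_mul_eval_rodrigues, ← Function.iterate_add_apply, ← two_mul,
    iterate_derivative_sq_sub_one_pow_two_mul]
  simp only [eval_C]
  rw [intervalIntegral.integral_const_mul, integral_sq_sub_one_pow, Nat.factorial_succ]
  push_cast
  field_simp
  rw [← pow_mul, pow_mul', neg_one_sq, one_pow]

lemma legendre_eq_eval (n : ℕ) (x : ℝ) :
    legendre n x
      = (2 ^ n * n.factorial : ℝ)⁻¹ * (derivative^[n] ((X ^ 2 - 1 : ℝ[X]) ^ n)).eval x := by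
  have h : (fun y : ℝ => (y ^ 2 - 1) ^ n) = fun y => ((X ^ 2 - 1 : ℝ[X]) ^ n).eval y := by
    simp
  rw [legendre, h, iteratedDeriv_eval, one_div]

/-- Orthogonality of the Legendre polynomials on `[−1, 1]`:
`∫_{−1}^{1} P_j(x) P_k(x) dx = 0` when `j ≠ k`, and `∫_{−1}^{1} P_k(x)² dx = 2/(2k + 1)`. -/
theorem legendre_orthogonality (j k : ℕ) :
    (j ≠ k → ∫ x in (-1 : ℝ)..1, legendre j x * legendre k x = 0) ∧
      (∫ x in (-1 : ℝ)..1, (legendre k x) ^ 2) = 2 / (2 * (k : ℝ) + 1) := by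
  simp_rw [legendre_eq_eval, mul_mul_mul_comm _ ((derivative^[j] _).eval _), mul_pow,
    intervalIntegral.integral_const_mul]
  refine ⟨fun h => by rw [integral_rodrigues_mul_rodrigues_of_ne h, mul_zero], ?_⟩
  rw [integral_rodrigues_sq]
  field_simp
  ring
end

section
/- Let x ∈ ℝⁿ, let a_1, …, a_d ∈ ℝⁿ, b_1, …, b_d ∈ ℝ, and let M ≥ 0 be a real number such that for every i, a_iᵀ x − b_i ≤ M and a_iᵀ x ≥ −M. Then x lies in the union of the half-spaces {y : a_iᵀ y ≤ b_i} (i.e., there exists some i with a_iᵀ x ≤ b_i) if and only if there exist z_1, …, z_d ∈ {0, 1} with z_1 + ⋯ + z_d ≥ 1 such that for every i, −M ≤ a_iᵀ x + M · z_i ≤ b_i + M. -/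
open Finset

section BigM

variable {R : Type*} [CommRing R] [LinearOrder R] [IsStrictOrderedRing R]

def BigMConstraint (M s c z : R) : Prop :=
  -M ≤ s + M * z ∧ s + M * z ≤ c + M

theorem bigMConstraint_one_iff {M s c : R} (hM : 0 ≤ M) (hs : -M ≤ s) :
    BigMConstraint M s c 1 ↔ s ≤ c := by
  simp only [BigMConstraint, mul_one, add_le_add_iff_right, and_iff_right_iff_imp]
  intro _
  linarith

theorem bigMConstraint_zero {M s c : R} (hs : -M ≤ s) (hsc : s - c ≤ M) :
    BigMConstraint M s c 0 := by
  simp only [BigMConstraint, mul_zero, add_zero]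
  exact ⟨hs, by linarith⟩

theorem exists_eq_one_of_one_le_sum {ι : Type*} {t : Finset ι} {z : ι → R}
    (hz : ∀ i, z i = 0 ∨ z i = 1) (hsum : 1 ≤ ∑ i ∈ t, z i) : ∃ i ∈ t, z i = 1 := by
  by_contra! hne
  have hzero : ∀ i ∈ t, z i = 0 := fun i hi => (hz i).resolve_right (hne i hi)
  rw [sum_eq_zero hzero] at hsum
  exact absurd hsum (not_le.mpr zero_lt_one)

theorem exists_le_iff_exists_binary_bigMConstraint {ι : Type*} [Fintype ι] [DecidableEq ι]
    {M : R} (hM : 0 ≤ M) {s c : ι → R} (hsc : ∀ i, s i - c i ≤ M) (hs : ∀ i, -M ≤ s i) :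
    (∃ i, s i ≤ c i) ↔
      ∃ z : ι → R, (∀ i, z i = 0 ∨ z i = 1) ∧ 1 ≤ ∑ i, z i ∧
        ∀ i, BigMConstraint M (s i) (c i) (z i) := by
  constructor
  · rintro ⟨i₀, hi₀⟩
    refine ⟨Pi.single i₀ 1, fun i => ?_, by simp, fun i => ?_⟩
    · rcases eq_or_ne i i₀ with rfl | hi <;> simp [*]
    · rcases eq_or_ne i i₀ with rfl | hi
      · simpa using (bigMConstraint_one_iff hM (hs i)).2 hi₀
      · simpa [hi] using bigMConstraint_zero (hs i) (hsc i)
  · rintro ⟨z, hbin, hsum, hcon⟩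
    obtain ⟨i, -, hi⟩ := exists_eq_one_of_one_le_sum hbin hsum
    exact ⟨i, (bigMConstraint_one_iff hM (hs i)).1 (hi ▸ hcon i)⟩

end BigM

/-- Big-M reformulation of the disjunctive safe-set (obstacle-avoidance) constraint:
assuming `aᵢᵀx − bᵢ ≤ M` and `aᵢᵀx ≥ −M` for all `i`, the point `x` lies in the union
of the half-spaces `{y : aᵢᵀ y ≤ bᵢ}` if and only if there exist binary variables
`zᵢ ∈ {0, 1}` with `∑ zᵢ ≥ 1` such that `−M ≤ aᵢᵀx + M zᵢ ≤ bᵢ + M` for every `i`. -/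
theorem bigM_disjunctive_reformulation (n d : ℕ) (x : Fin n → ℝ)
    (a : Fin d → Fin n → ℝ) (b : Fin d → ℝ) (M : ℝ) (hM : 0 ≤ M)
    (h1 : ∀ i, (∑ j, a i j * x j) - b i ≤ M)
    (h2 : ∀ i, -M ≤ ∑ j, a i j * x j) :
    (∃ i, ∑ j, a i j * x j ≤ b i) ↔
      ∃ z : Fin d → ℝ, (∀ i, z i = 0 ∨ z i = 1) ∧ 1 ≤ ∑ i, z i ∧
        ∀ i, -M ≤ (∑ j, a i j * x j) + M * z i ∧
          (∑ j, a i j * x j) + M * z i ≤ b i + M :=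
  exists_le_iff_exists_binary_bigMConstraint hM h1 h2
end

section
/- Let (Ω, μ) be a measure space with μ a finite measure, let φ : Ω → ℝ be bounded and measurable, let x : Ω → ℝⁿ be integrable, let a ∈ ℝⁿ, b ∈ ℝ, M ≥ 0, and let z ∈ {0, 1} be fixed. If for μ-almost every β ∈ Ω one has −M ≤ aᵀ x(β) + M · z ≤ b + M, then the scalar moment aᵀ ∫_Ω φ(β) · x(β) dμ(β) satisfies (−M − M·z) · m⁺ − (b + M − M·z) · m⁻ ≤ aᵀ ∫_Ω φ(β) · x(β) dμ(β) ≤ (b + M − M·z) · m⁺ + (M + M·z) · m⁻. -/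
/-! The constraint says exactly that `g = aᵀx` lies a.e. in `[-M - Mz, b + M - Mz]`, and
`aᵀ ∫ φ x = ∫ φ g`. Writing `φ = φ⁺ - φ⁻` with both parts nonnegative, `φ g` is bounded
pointwise by the corresponding combination of `φ⁺` and `φ⁻`, and integrating gives the claim. -/

open MeasureTheory Set

theorem mul_mem_Icc_of_mem_Icc {p g L U : ℝ} (hg : g ∈ Icc L U) :
    p * g ∈ Icc (L * max p 0 - U * max (-p) 0) (U * max p 0 - L * max (-p) 0) := by
  obtain ⟨hL, hU⟩ := hg
  rcases le_total p 0 with hp | hp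
  · rw [max_eq_right hp, max_eq_left (neg_nonneg.mpr hp)]
    constructor <;> nlinarith
  · rw [max_eq_left hp, max_eq_right (neg_nonpos.mpr hp)]
    constructor <;> nlinarith

section

variable {Ω : Type*} [MeasurableSpace Ω] {μ : Measure Ω}

theorem integral_mul_mem_Icc_of_ae_mem_Icc {φ g : Ω → ℝ} {L U : ℝ} (hφ : Integrable φ μ)
    (hφg : Integrable (fun β => φ β * g β) μ) (hg : ∀ᵐ β ∂μ, g β ∈ Icc L U) :
    ∫ β, φ β * g β ∂μ ∈
      Icc (L * ∫ β, max (φ β) 0 ∂μ - U * ∫ β, max (-φ β) 0 ∂μ)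
        (U * ∫ β, max (φ β) 0 ∂μ - L * ∫ β, max (-φ β) 0 ∂μ) := by
  have hpos : Integrable (fun β => max (φ β) 0) μ := hφ.pos_part
  have hneg : Integrable (fun β => max (-φ β) 0) μ := hφ.neg.pos_part
  have hcomb (c d : ℝ) : c * ∫ β, max (φ β) 0 ∂μ - d * ∫ β, max (-φ β) 0 ∂μ
      = ∫ β, c * max (φ β) 0 - d * max (-φ β) 0 ∂μ := by
    rw [integral_sub (hpos.const_mul c) (hneg.const_mul d), integral_const_mul,
      integral_const_mul]
  have hmem := hg.mono fun β hβ => mul_mem_Icc_of_mem_Icc (p := φ β) hβ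
  rw [hcomb, hcomb]
  exact ⟨integral_mono_ae ((hpos.const_mul L).sub (hneg.const_mul U)) hφg
      (hmem.mono fun β hβ => hβ.1),
    integral_mono_ae hφg ((hpos.const_mul U).sub (hneg.const_mul L))
      (hmem.mono fun β hβ => hβ.2)⟩

theorem sum_mul_eval_integral {ι : Type*} [Fintype ι] (a : ι → ℝ) {f : Ω → ι → ℝ}
    (hf : Integrable f μ) :
    ∑ j, a j * (∫ β, f β ∂μ) j = ∫ β, ∑ j, a j * f β j ∂μ := by
  rw [integral_finsetSum _ fun j _ => (hf.eval j).const_mul (a j)]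
  simp only [eval_integral hf.eval, integral_const_mul]

end

theorem bigM_moment_kernelization_general
    {Ω : Type*} [MeasurableSpace Ω] (μ : Measure Ω) [IsFiniteMeasure μ]
    (φ : Ω → ℝ) (hφm : Measurable φ) (C : ℝ) (hφb : ∀ β, |φ β| ≤ C)
    (n : ℕ) (x : Ω → Fin n → ℝ) (hx : Integrable x μ)
    (a : Fin n → ℝ) (b M z : ℝ)
    (hcon : ∀ᵐ β ∂μ, -M ≤ (∑ j, a j * x β j) + M * z ∧
      (∑ j, a j * x β j) + M * z ≤ b + M) :
    (-M - M * z) * (∫ β, max (φ β) 0 ∂μ)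
        - (b + M - M * z) * (∫ β, max (-φ β) 0 ∂μ)
      ≤ (∑ j, a j * (∫ β, φ β • x β ∂μ) j) ∧
    (∑ j, a j * (∫ β, φ β • x β ∂μ) j)
      ≤ (b + M - M * z) * (∫ β, max (φ β) 0 ∂μ)
        + (M + M * z) * (∫ β, max (-φ β) 0 ∂μ) := by
  set g : Ω → ℝ := fun β => ∑ j, a j * x β j
  have hφbound : ∀ᵐ β ∂μ, ‖φ β‖ ≤ C := ae_of_all _ hφb
  have hφ : Integrable φ μ :=
    (integrable_const C).mono' hφm.aestronglyMeasurable hφbound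
  have hg : Integrable g μ :=
    integrable_finsetSum _ fun j _ => (hx.eval j).const_mul (a j)
  have hφx : Integrable (fun β => φ β • x β) μ :=
    hx.bdd_smul C hφm.aestronglyMeasurable hφbound
  have hmoment : ∑ j, a j * (∫ β, φ β • x β ∂μ) j = ∫ β, φ β * g β ∂μ := by
    rw [sum_mul_eval_integral a hφx]
    congr 1 with β
    simp only [g, Pi.smul_apply, smul_eq_mul, Finset.mul_sum]
    exact Finset.sum_congr rfl fun j _ => by ring
  have hbounds : ∀ᵐ β ∂μ, g β ∈ Icc (-M - M * z) (b + M - M * z) :=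
    hcon.mono fun β hβ => ⟨by linarith [hβ.1], by linarith [hβ.2]⟩
  obtain ⟨hlow, hupp⟩ :=
    integral_mul_mem_Icc_of_ae_mem_Icc hφ (hg.bdd_mul hφm.aestronglyMeasurable hφbound) hbounds
  rw [hmoment]
  constructor <;> linarith

/-- Moment-space representation of a single big-M obstacle-avoidance constraint with
binary variable `z`: if `−M ≤ aᵀx(β) + M z ≤ b + M` holds μ-almost everywhere, then
`(−M − Mz) m⁺ − (b + M − Mz) m⁻ ≤ aᵀ ∫ φ(β) x(β) dμ ≤ (b + M − Mz) m⁺ + (M + Mz) m⁻`,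
where `m⁺ = ∫ φ⁺ dμ` and `m⁻ = ∫ φ⁻ dμ` are the integrals of the positive and negative
parts of `φ`. -/
theorem bigM_moment_kernelization
    {Ω : Type*} [MeasurableSpace Ω] (μ : Measure Ω) [IsFiniteMeasure μ]
    (φ : Ω → ℝ) (hφm : Measurable φ) (C : ℝ) (hφb : ∀ β, |φ β| ≤ C)
    (n : ℕ) (x : Ω → Fin n → ℝ) (hx : Integrable x μ)
    (a : Fin n → ℝ) (b M z : ℝ) (hM : 0 ≤ M) (hz : z = 0 ∨ z = 1)
    (hcon : ∀ᵐ β ∂μ, -M ≤ (∑ j, a j * x β j) + M * z ∧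
      (∑ j, a j * x β j) + M * z ≤ b + M) :
    (-M - M * z) * (∫ β, max (φ β) 0 ∂μ)
        - (b + M - M * z) * (∫ β, max (-φ β) 0 ∂μ)
      ≤ (∑ j, a j * (∫ β, φ β • x β ∂μ) j) ∧
    (∑ j, a j * (∫ β, φ β • x β ∂μ) j)
      ≤ (b + M - M * z) * (∫ β, max (φ β) 0 ∂μ)
        + (M + M * z) * (∫ β, max (-φ β) 0 ∂μ) :=
  bigM_moment_kernelization_general μ φ hφm C hφb n x hx a b M z hcon
end
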